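/- arXiv:2602.03746 — 2 statements merged into one kernel-verified Lean document; each statement's English description precedes it below -/
import Mathlib

section
/- Let x be an infinite word over a finite alphabet A, let k ≥ 1, and let π : A^k → B be a higher k-block code into a finite alphabet B that is invertible on x. If x is uniformly factor-balanced, then the infinite word π(x) is uniformly factor-balanced. -/
/-!
Write `y = π(x)` and fix a word `w` over `B`. Whether `w` occurs in `y` at position `p` depends
only on the window `x[p, p + |w| + k - 1)`; conversely, at an occurrence of `w` this window is
determined by its first `k + l` letters, because `ρ` reads every later letter of `x` off `w`.
Grouping the occurrences of `w` in a factor of `y` by these first letters writes `|u|_w` as a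
sum of at most `|A| ^ (k + l)` counts `|u'|_W`, where `u'` is the factor of `x` under `u` and `W`
a window. Each of these counts is `C`-balanced, so `|u|_w` is `|A| ^ (k + l) * C`-balanced.
-/

open scoped Classical

section Core

variable {A : Type*} {B : Type*}

/-- `w` occurs at position `i` of the infinite word `x`. -/
def OccursAt (x : ℕ → A) (w : List A) (i : ℕ) : Prop :=
  w = (List.range w.length).map fun j => x (i + j)

/-- `w` is a factor of the infinite word `x`. -/
def IsFactor (x : ℕ → A) (w : List A) : Prop := ∃ i, OccursAt x w i

/-- The number of (possibly overlapping) occurrences of `w` in the finite word `u`,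
i.e. `|u|_w`. -/
noncomputable def countOccs (u w : List A) : ℕ :=
  ((Finset.range (u.length + 1)).filter fun i => w <+: u.drop i).card

/-- The finite word `w` is `C`-balanced in the infinite word `x`. -/
def BalancedIn (C : ℝ) (w : List A) (x : ℕ → A) : Prop :=
  ∀ u v : List A, IsFactor x u → IsFactor x v → u.length = v.length →
    |(countOccs u w : ℝ) - (countOccs v w : ℝ)| ≤ C

/-- Every finite word is `C_w`-balanced in `x` for some constant `C_w > 0`. -/
def FactorBalanced (x : ℕ → A) : Prop :=
  ∀ w : List A, ∃ C : ℝ, 0 < C ∧ BalancedIn C w x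

/-- There is a single constant `C > 0` such that every finite word is `C`-balanced in `x`. -/
def UniformlyFactorBalanced (x : ℕ → A) : Prop :=
  ∃ C : ℝ, 0 < C ∧ ∀ w : List A, BalancedIn C w x

/-- Every letter is `C`-balanced in `x`. -/
def LetterBalanced (C : ℝ) (x : ℕ → A) : Prop :=
  ∀ a : A, BalancedIn C [a] x

/-- `x` is `P`-power-free: no factor of `x` is a `P`-th power of a nonempty word. -/
def PowerFree (P : ℕ) (x : ℕ → A) : Prop :=
  ∀ v : List A, v ≠ [] → ¬ IsFactor x (List.flatten (List.replicate P v))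

/-- The length-`n` prefix of the infinite word `x`. -/
def wordPrefix (x : ℕ → A) (n : ℕ) : List A := (List.range n).map x

/-- The extension of a substitution to finite words. -/
def substWord (τ : A → List B) (w : List A) : List B := (w.map τ).flatten

/-- The word `w` has (prefix) frequency `μ` in `x`. -/
def HasFreq (x : ℕ → A) (w : List A) (μ : ℝ) : Prop :=
  Filter.Tendsto (fun n => (countOccs (wordPrefix x n) w : ℝ) / n)
    Filter.atTop (nhds μ)

/-- `τ` is `k`-decisive in `x` with witness map `r` (each `r a` of length `k ≥ 1`,
and `τ b` starts with `r a` whenever `ab` is a factor of `x`). -/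
def DecisiveWith (τ : A → List B) (x : ℕ → A) (r : A → List B) (k : ℕ) : Prop :=
  1 ≤ k ∧ (∀ a, (r a).length = k) ∧
    ∀ a b : A, IsFactor x [a, b] → r a <+: τ b

/-- `τ` is `k`-decisive in `x`. -/
def Decisive (τ : A → List B) (x : ℕ → A) (k : ℕ) : Prop :=
  ∃ r : A → List B, DecisiveWith τ x r k

/-- The image of the infinite word `x` under the substitution `τ`: when the images of
prefixes of `x` have unbounded length, `substInf τ x` is the infinite word `τ(x)`. -/
noncomputable def substInf [Nonempty B] (τ : A → List B) (x : ℕ → A) (j : ℕ) : B :=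
  if h : ∃ n, j < (substWord τ (wordPrefix x n)).length
  then (substWord τ (wordPrefix x (Nat.find h))).get ⟨j, Nat.find_spec h⟩
  else Classical.arbitrary B

/-- Iterates of a substitution: `substIter τ n a = τ^n(a)` as a finite word. -/
def substIter (τ : A → List A) : ℕ → A → List A
  | 0, a => [a]
  | n+1, a => substWord (substIter τ n) (τ a)

/-- `τ` is prolongable on the letter `a`. -/
def Prolongable (τ : A → List A) (a : A) : Prop :=
  (τ a).head? = some a ∧ (∀ b, τ b ≠ []) ∧
    Filter.Tendsto (fun n => (substIter τ n a).length) Filter.atTop Filter.atTop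

/-- The fixed point `τ^ω(a)` of a substitution prolongable on `a`:
the limit of the prefix chain `τ^n(a)`. -/
noncomputable def fixedPoint (τ : A → List A) (a : A) (j : ℕ) : A :=
  if h : ∃ n, j < (substIter τ n a).length
  then (substIter τ (Nat.find h) a).get ⟨j, Nat.find_spec h⟩
  else a

/-- The factor complexity of `x`: the number of distinct length-`n` factors. -/
noncomputable def complexity (x : ℕ → A) (n : ℕ) : ℕ :=
  Set.ncard {w : List A | w.length = n ∧ IsFactor x w}

/-- Every factor of `x` occurs infinitely often in `x`. -/
def Recurrent (x : ℕ → A) : Prop :=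
  ∀ w : List A, IsFactor x w → ∀ N : ℕ, ∃ i, N ≤ i ∧ OccursAt x w i

/-- For every factor `w` of `x` there is `k` such that `w` occurs in
every length-`k` factor of `x`. -/
def UniformlyRecurrent (x : ℕ → A) : Prop :=
  ∀ w : List A, IsFactor x w → ∃ k : ℕ, ∀ v : List A, IsFactor x v →
    v.length = k → 1 ≤ countOccs v w

end Core

open Finset

section FactorAt

variable {A : Type*}

def factorAt (z : ℕ → A) (i n : ℕ) : List A := (List.range n).map fun j => z (i + j)

@[simp]
theorem length_factorAt (z : ℕ → A) (i n : ℕ) : (factorAt z i n).length = n := by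
  simp [factorAt]

theorem occursAt_iff_factorAt_eq {z : ℕ → A} {w : List A} {i : ℕ} :
    OccursAt z w i ↔ factorAt z i w.length = w :=
  eq_comm

theorem occursAt_factorAt (z : ℕ → A) (i n : ℕ) : OccursAt z (factorAt z i n) i := by
  rw [occursAt_iff_factorAt_eq, length_factorAt]

theorem factorAt_eq_factorAt_iff {z z' : ℕ → A} {i i' n : ℕ} :
    factorAt z i n = factorAt z' i' n ↔ ∀ t < n, z (i + t) = z' (i' + t) := by
  simp [factorAt, List.map_inj_left]

theorem take_factorAt (z : ℕ → A) (i n m : ℕ) :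
    (factorAt z i n).take m = factorAt z i (min m n) := by
  rw [factorAt, factorAt, ← List.map_take, List.take_range]

theorem drop_factorAt (z : ℕ → A) (i n m : ℕ) :
    (factorAt z i n).drop m = factorAt z (i + m) (n - m) := by
  refine List.ext_getElem (by simp) fun t _ _ => ?_
  simp [factorAt, Nat.add_assoc]

theorem prefix_factorAt_iff {z : ℕ → A} {w : List A} {i n : ℕ} :
    w <+: factorAt z i n ↔ w.length ≤ n ∧ OccursAt z w i := by
  rw [List.prefix_iff_eq_take, take_factorAt, occursAt_iff_factorAt_eq, eq_comm]
  constructor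
  · intro h
    have hle : w.length ≤ n := by simpa using congrArg List.length h
    rw [min_eq_left hle] at h
    exact ⟨hle, h⟩
  · rintro ⟨hle, h⟩
    rwa [min_eq_left hle]

theorem countOccs_factorAt (z : ℕ → A) (i n : ℕ) (w : List A) :
    countOccs (factorAt z i n) w =
      #{j ∈ range (n + 1 - w.length) | OccursAt z w (i + j)} := by
  unfold countOccs
  congr 1
  ext j
  simp only [mem_filter, mem_range, length_factorAt, drop_factorAt,
    prefix_factorAt_iff]
  constructor
  · exact fun ⟨_, hw, hocc⟩ => ⟨by omega, hocc⟩
  · exact fun ⟨hj, hocc⟩ => ⟨by omega, by omega, hocc⟩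

theorem balancedIn_iff_factorAt {C : ℝ} {w : List A} {x : ℕ → A} :
    BalancedIn C w x ↔ ∀ i i' n,
      |(countOccs (factorAt x i n) w : ℝ) - countOccs (factorAt x i' n) w| ≤ C := by
  constructor
  · exact fun h i i' n => h _ _ ⟨i, occursAt_factorAt x i n⟩ ⟨i', occursAt_factorAt x i' n⟩
      (by simp)
  · rintro h u v ⟨i, hu⟩ ⟨i', hv⟩ huv
    rw [occursAt_iff_factorAt_eq] at hu hv
    rw [← hu, ← hv, huv]
    exact h i i' v.length

end FactorAt

section SlidingBlockCode

variable {A B : Type*} {k : ℕ}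

def blockAt (x : ℕ → A) (p m : ℕ) : Fin m → A := fun j => x (p + j)

def slidingBlockCode (π : (Fin k → A) → B) (x : ℕ → A) : ℕ → B :=
  fun n => π (blockAt x n k)

-- At `k = 0` the truncated `k - 1` is `0`; `π` is then constant and any window will do.
theorem factorAt_slidingBlockCode_eq {π : (Fin k → A) → B} {x : ℕ → A} {p q n : ℕ}
    (h : factorAt x p (n + (k - 1)) = factorAt x q (n + (k - 1))) :
    factorAt (slidingBlockCode π x) p n = factorAt (slidingBlockCode π x) q n := by
  rw [factorAt_eq_factorAt_iff] at h ⊢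
  intro t ht
  refine congrArg π (funext fun j => ?_)
  simp only [blockAt, Nat.add_assoc]
  exact h _ (by omega)

theorem factorAt_eq_of_factorAt_slidingBlockCode_eq {l : ℕ} {π : (Fin k → A) → B}
    {ρ : (Fin l → B) → A} {x : ℕ → A}
    (hρ : ∀ n, slidingBlockCode ρ (slidingBlockCode π x) n = x (n + k + l)) {p q n : ℕ}
    (hy : factorAt (slidingBlockCode π x) p n = factorAt (slidingBlockCode π x) q n)
    (hx : ∀ r < min (k + l) (n + (k - 1)), x (p + r) = x (q + r)) :
    factorAt x p (n + (k - 1)) = factorAt x q (n + (k - 1)) := by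
  rw [factorAt_eq_factorAt_iff] at hy ⊢
  intro r hr
  by_cases hrkl : r < k + l
  · exact hx r (lt_min hrkl hr)
  · obtain ⟨s, rfl⟩ : ∃ s, r = s + k + l := ⟨r - (k + l), by omega⟩
    simp only [← Nat.add_assoc, ← hρ]
    refine congrArg ρ (funext fun j => ?_)
    simp only [blockAt, Nat.add_assoc]
    exact hy _ (by omega)

end SlidingBlockCode

section Balance

variable {A B : Type*} {k l : ℕ} {π : (Fin k → A) → B} {ρ : (Fin l → B) → A}
  {x : ℕ → A}

-- The window can be shorter than `k + l`, hence the `min`.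
theorem card_filter_occursAt_slidingBlockCode_eq_countOccs
    (hρ : ∀ n, slidingBlockCode ρ (slidingBlockCode π x) n = x (n + k + l))
    {w : List B} {p₀ : ℕ} (hp₀ : OccursAt (slidingBlockCode π x) w p₀) (i n : ℕ) :
    #{j ∈ range (n + 1 - w.length) | OccursAt (slidingBlockCode π x) w (i + j) ∧
        blockAt x (i + j) (min (k + l) (w.length + (k - 1))) =
          blockAt x p₀ (min (k + l) (w.length + (k - 1)))} =
      countOccs (factorAt x i (n + (k - 1))) (factorAt x p₀ (w.length + (k - 1))) := by
  rw [countOccs_factorAt, length_factorAt,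
    show n + (k - 1) + 1 - (w.length + (k - 1)) = n + 1 - w.length by omega]
  rw [occursAt_iff_factorAt_eq] at hp₀
  refine congrArg card (filter_congr fun j _ => ?_)
  rw [occursAt_iff_factorAt_eq, occursAt_iff_factorAt_eq, length_factorAt]
  constructor
  · rintro ⟨hocc, hpre⟩
    exact factorAt_eq_of_factorAt_slidingBlockCode_eq hρ (hocc.trans hp₀.symm)
      fun r hr => congrFun hpre ⟨r, hr⟩
  · intro hW
    refine ⟨(factorAt_slidingBlockCode_eq hW).trans hp₀, funext fun s => ?_⟩
    exact factorAt_eq_factorAt_iff.1 hW s (lt_of_lt_of_le s.isLt (min_le_right _ _))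

theorem abs_countOccs_slidingBlockCode_sub_le [Fintype A]
    (hρ : ∀ n, slidingBlockCode ρ (slidingBlockCode π x) n = x (n + k + l))
    {C : ℝ} (hC : 0 ≤ C) (hbal : ∀ W, BalancedIn C W x) (w : List B) (i i' n : ℕ) :
    |(countOccs (factorAt (slidingBlockCode π x) i n) w : ℝ) -
        countOccs (factorAt (slidingBlockCode π x) i' n) w| ≤ Fintype.card A ^ (k + l) * C := by
  set K := min (k + l) (w.length + (k - 1))
  let occ (i : ℕ) : Finset ℕ :=
    {j ∈ range (n + 1 - w.length) | OccursAt (slidingBlockCode π x) w (i + j)}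
  have hfiber (f : Fin K → A) :
      |(#{j ∈ occ i | blockAt x (i + j) K = f} : ℝ) -
          #{j ∈ occ i' | blockAt x (i' + j) K = f}| ≤ C := by
    by_cases hf : ∃ p₀, OccursAt (slidingBlockCode π x) w p₀ ∧ blockAt x p₀ K = f
    · obtain ⟨p₀, hp₀, rfl⟩ := hf
      rw [filter_filter, filter_filter,
        card_filter_occursAt_slidingBlockCode_eq_countOccs hρ hp₀,
        card_filter_occursAt_slidingBlockCode_eq_countOccs hρ hp₀]
      exact balancedIn_iff_factorAt.1 (hbal _) i i' _
    · push Not at hf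
      have hempty (i : ℕ) : {j ∈ occ i | blockAt x (i + j) K = f} = ∅ :=
        filter_eq_empty_iff.2 fun j hj => hf _ (mem_filter.1 hj).2
      simp [hempty, hC]
  have hcard : (Fintype.card (Fin K → A) : ℝ) ≤ Fintype.card A ^ (k + l) := by
    rw [Fintype.card_fun, Fintype.card_fin]
    exact_mod_cast Nat.pow_le_pow_right (Fintype.card_pos_iff.2 ⟨x 0⟩) (min_le_left _ _)
  rw [countOccs_factorAt, countOccs_factorAt,
    card_eq_sum_card_fiberwise (f := fun j => blockAt x (i + j) K) (t := univ)
      fun _ _ => mem_univ _,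
    card_eq_sum_card_fiberwise (f := fun j => blockAt x (i' + j) K) (t := univ)
      fun _ _ => mem_univ _]
  push_cast
  rw [← sum_sub_distrib]
  calc _ ≤ ∑ f, |(#{j ∈ occ i | blockAt x (i + j) K = f} : ℝ) -
          #{j ∈ occ i' | blockAt x (i' + j) K = f}| := abs_sum_le_sum_abs _ _
    _ ≤ ∑ _f : Fin K → A, C := sum_le_sum fun f _ => hfiber f
    _ = Fintype.card (Fin K → A) * C := by simp
    _ ≤ Fintype.card A ^ (k + l) * C := by gcongr

end Balance

theorem stmt8_general {A B : Type*} [Fintype A] (k : ℕ)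
    (π : (Fin k → A) → B) (x : ℕ → A)
    (hinv : ∃ l : ℕ, 1 ≤ l ∧ ∃ ρ : (Fin l → B) → A,
      ∀ n : ℕ, ρ (fun j => π fun i => x (n + (j : ℕ) + (i : ℕ))) = x (n + k + l))
    (h : UniformlyFactorBalanced x) :
    UniformlyFactorBalanced (fun n => π fun j => x (n + (j : ℕ))) := by
  obtain ⟨l, -, ρ, hρ⟩ := hinv
  obtain ⟨C, hC, hbal⟩ := h
  have : Nonempty A := ⟨x 0⟩
  exact ⟨Fintype.card A ^ (k + l) * C, by positivity, fun w =>
    balancedIn_iff_factorAt.2 (abs_countOccs_slidingBlockCode_sub_le hρ hC.le hbal w)⟩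

/-- Proposition: the image of a uniformly factor-balanced word under a higher `k`-block
code that is invertible on the word is uniformly factor-balanced. -/
theorem stmt8 {A B : Type*} [Fintype A] [Fintype B] (k : ℕ) (hk : 1 ≤ k)
    (π : (Fin k → A) → B) (x : ℕ → A)
    (hinv : ∃ l : ℕ, 1 ≤ l ∧ ∃ ρ : (Fin l → B) → A,
      ∀ n : ℕ, ρ (fun j => π fun i => x (n + (j : ℕ) + (i : ℕ))) = x (n + k + l))
    (h : UniformlyFactorBalanced x) :
    UniformlyFactorBalanced (fun n => π fun j => x (n + (j : ℕ))) :=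
  stmt8_general k π x hinv h
end

section
/- Let (τ_n, a_n)_{n≥0} be a congenial sequence whose generated word x^{(0)} is infinite, and suppose there exists K > 0 such that |τ_n| ≤ K and #A_n ≤ K for all n ≥ 0, and |τ_{0,n}(a)| ≤ K·|τ_{0,n}(b)| for all a, b ∈ A_n and n ≥ 1. Suppose each τ_n is decisive in x^{(n+1)}. Then for every nonempty factor u of x^{(0)} there exists n ≥ 1 such that: (i) the substitution τ_{0,n} is |u|-decisive in x^{(n)}; and (ii) |u| ≤ |τ_{0,n}(a)| ≤ K³·|u| for all a ∈ A_n. -/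
open scoped Classical

section Congenial

variable {A : ℕ → Type*}

/-- `compSubst τ m k : A (m+k) → List (A m)` is `τ_{m,m+k} = τ_m ∘ τ_{m+1} ∘ ⋯ ∘ τ_{m+k-1}`
(and the identity for `k = 0`). -/
def compSubst (τ : ∀ n, A (n+1) → List (A n)) (m : ℕ) :
    (k : ℕ) → A (m + k) → List (A m)
  | 0, a => [a]
  | k+1, a => ((τ (m + k) a).map (compSubst τ m k)).flatten

/-- `limitWord τ s m` is the infinite word `x^{(m)}`: the limit of the words
`τ_{m,m+k}(s (m+k))`, which form a chain of prefixes when the sequence is congenial. -/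
noncomputable def limitWord (τ : ∀ n, A (n+1) → List (A n)) (s : ∀ n, A n)
    (m : ℕ) (j : ℕ) : A m :=
  if h : ∃ k, j < (compSubst τ m k (s (m + k))).length
  then (compSubst τ m (Nat.find h) (s (m + Nat.find h))).get ⟨j, Nat.find_spec h⟩
  else s m

end Congenial

lemma substWord_length' {A B : Type*} (σ : A → List B) (l : List A) :
    (substWord σ l).length = (l.map fun c => (σ c).length).sum := by
  simp only [substWord, List.length_flatten, List.map_map]
  rfl

lemma substWord_prefix' {A B : Type*} (σ : A → List B) {p q : List A} (h : p <+: q) :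
    substWord σ p <+: substWord σ q := by
  obtain ⟨t, rfl⟩ := h
  exact ⟨substWord σ t, by simp [substWord]⟩

lemma list_sum_le' {α : Type*} (l : List α) (f : α → ℕ) {K B : ℝ}
    (hB : 0 ≤ B) (hl : (l.length : ℝ) ≤ K) (h : ∀ c ∈ l, (f c : ℝ) ≤ B) :
    (((l.map f).sum : ℕ) : ℝ) ≤ K * B := by
  have h1 : (((l.map f).sum : ℕ) : ℝ) = ((l.map fun c => ((f c : ℝ))).sum) := by
    rw [Nat.cast_list_sum, List.map_map]
    rfl
  have h2 : (l.map fun c => ((f c):ℝ)).sum ≤ ((l.map fun c => ((f c):ℝ)).length : ℕ) • B :=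
    List.sum_le_card_nsmul _ _ (by simpa using h)
  rw [h1]
  refine h2.trans ?_
  rw [List.length_map, nsmul_eq_mul]
  exact mul_le_mul_of_nonneg_right hl hB

lemma list_sum_ge' {α : Type*} (l : List α) (f : α → ℕ) (m : ℕ)
    (hne : l ≠ []) (h : ∀ c ∈ l, m ≤ f c) : m ≤ (l.map f).sum := by
  obtain ⟨c, t, rfl⟩ := List.exists_cons_of_ne_nil hne
  refine (h c List.mem_cons_self).trans ?_
  exact List.single_le_sum (fun _ _ => Nat.zero_le _) _
    (List.mem_map_of_mem (f := f) List.mem_cons_self)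

/-- Lemma (finding a representative level): under the congenial hypotheses with bounds
`K` and decisiveness at each level, for every nonempty factor `u` of `x⁽⁰⁾` there
exists `n ≥ 1` such that `τ_{0,n}` is `|u|`-decisive in `x⁽ⁿ⁾` and
`|u| ≤ |τ_{0,n}(b)| ≤ K³·|u|` for every letter `b`. -/
theorem stmt15 {A : ℕ → Type*} [∀ n, Fintype (A n)]
    (τ : ∀ n, A (n+1) → List (A n)) (s : ∀ n, A n)
    (hcong : ∀ n, (τ n (s (n+1))).head? = some (s n))
    (hinfinite : ∀ N : ℕ, ∃ k, N ≤ (compSubst τ 0 k (s (0 + k))).length)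
    (K : ℝ) (hK : 0 < K)
    (hlen : ∀ n, ∀ b : A (n+1), ((τ n b).length : ℝ) ≤ K)
    (hcard : ∀ n, (Fintype.card (A n) : ℝ) ≤ K)
    (hquasi : ∀ n, 1 ≤ n → ∀ a b : A (0 + n),
      ((compSubst τ 0 n a).length : ℝ) ≤ K * ((compSubst τ 0 n b).length : ℝ))
    (hdec : ∀ n, ∃ d, Decisive (τ n) (limitWord τ s (n + 1)) d)
    (u : List (A 0)) (hu : u ≠ []) (hfac : IsFactor (limitWord τ s 0) u) :
    ∃ n, 1 ≤ n ∧ Decisive (compSubst τ 0 n) (limitWord τ s (0 + n)) u.length ∧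
      ∀ b : A (0 + n), u.length ≤ (compSubst τ 0 n b).length ∧
        ((compSubst τ 0 n b).length : ℝ) ≤ K ^ 3 * (u.length : ℝ) := by
  classical
  have hK1 : (1:ℝ) ≤ K := by
    have h0 : 0 < Fintype.card (A 0) := @Fintype.card_pos _ _ ⟨s 0⟩
    have := hcard 0
    have : (1:ℝ) ≤ (Fintype.card (A 0) : ℝ) := by exact_mod_cast h0
    linarith [hcard 0]
  have hu1 : 1 ≤ u.length := List.length_pos_iff.2 hu
  have hrec : ∀ k (b : A (0+(k+1))), compSubst τ 0 (k+1) b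
      = substWord (compSubst τ 0 k) (τ (0+k) b) := fun k b => rfl
  -- monotonicity of the generating lengths
  have hLmono : Monotone (fun k => (compSubst τ 0 k (s (0 + k))).length) := by
    refine monotone_nat_of_le_succ (fun k => ?_)
    have hh := hcong (0+k)
    obtain ⟨rest, hrest⟩ : ∃ rest, τ (0+k) (s ((0+k)+1)) = s (0+k) :: rest := by
      cases hcase : τ (0+k) (s ((0+k)+1)) with
      | nil => rw [hcase] at hh; simp at hh
      | cons a t =>
        rw [hcase] at hh
        simp only [List.head?] at hh
        injection hh with h
        refine ⟨t, ?_⟩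
        rw [← h]
        try exact hcase
    have heq : compSubst τ 0 (k+1) (s (0+(k+1)))
        = substWord (compSubst τ 0 k) (s (0+k) :: rest) := by
      rw [hrec k (s (0+(k+1)))]
      exact congrArg _ hrest
    show (compSubst τ 0 k (s (0+k))).length ≤ (compSubst τ 0 (k+1) (s (0+(k+1)))).length
    rw [heq, substWord_length', List.map_cons, List.sum_cons]
    exact Nat.le_add_right _ _
  -- main step, given a good level n with two-sided bounds
  have main : ∀ n, 1 ≤ n →
      (∀ b : A (0+n), u.length ≤ (compSubst τ 0 n b).length) →
      (∀ c : A (0+n), ((compSubst τ 0 n c).length : ℝ) ≤ K^2 * u.length) →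
      ∃ n, 1 ≤ n ∧ Decisive (compSubst τ 0 n) (limitWord τ s (0 + n)) u.length ∧
        ∀ b : A (0 + n), u.length ≤ (compSubst τ 0 n b).length ∧
          ((compSubst τ 0 n b).length : ℝ) ≤ K ^ 3 * (u.length : ℝ) := by
    intro n hn1 hlow hupp
    have hne : ∀ b : A (0+(n+1)), τ (0+n) b ≠ [] := by
      intro b hemp
      have h0 : (compSubst τ 0 (n+1) b).length = 0 := by
        rw [hrec n b, hemp]; rfl
      have hq := hquasi (n+1) (by omega) (s (0+(n+1))) b
      rw [h0] at hq
      have hL : u.length ≤ (compSubst τ 0 (n+1) (s (0+(n+1)))).length :=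
        (hlow (s (0+n))).trans (hLmono (Nat.le_succ n))
      have : (1:ℝ) ≤ ((compSubst τ 0 (n+1) (s (0+(n+1)))).length : ℝ) := by
        exact_mod_cast hu1.trans hL
      rw [Nat.cast_zero, mul_zero] at hq
      linarith
    refine ⟨n+1, by omega, ?_, ?_⟩
    · -- decisiveness
      obtain ⟨d, ρ, hd1, hdlen, hdpre⟩ := hdec (0+n)
      have hρne : ∀ a : A (0+(n+1)), ρ a ≠ [] := by
        intro a h
        have := hdlen a; rw [h] at this; simp at this; omega
      have hlen' : ∀ a : A (0+(n+1)),
          u.length ≤ (substWord (compSubst τ 0 n) (ρ a)).length := by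
        intro a
        rw [substWord_length']
        exact list_sum_ge' _ _ _ (hρne a) (fun c _ => hlow c)
      refine ⟨fun a => (substWord (compSubst τ 0 n) (ρ a)).take u.length, hu1, ?_, ?_⟩
      · intro a
        rw [List.length_take]
        exact Nat.min_eq_left (hlen' a)
      · intro a b hab
        have hpre : ρ a <+: τ (0+n) b := hdpre a b hab
        have h2 : substWord (compSubst τ 0 n) (ρ a) <+: compSubst τ 0 (n+1) b := by
          rw [hrec n b]; exact substWord_prefix' _ hpre
        exact (List.take_prefix _ _).trans h2
    · -- length bounds
      intro b
      constructor
      · rw [hrec n b, substWord_length']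
        exact list_sum_ge' _ _ _ (hne b) (fun c _ => hlow c)
      · rw [hrec n b, substWord_length']
        have := list_sum_le' (τ (0+n) b) (fun c => (compSubst τ 0 n c).length)
          (by positivity) (hlen (0+n) b) (fun c _ => hupp c)
        refine this.trans (le_of_eq ?_)
        ring
  -- existence of a good level
  have hQex : ∃ n, 1 ≤ n ∧ ∀ b : A (0+n), u.length ≤ (compSubst τ 0 n b).length := by
    obtain ⟨k, hk⟩ := hinfinite ⌈K * u.length⌉₊
    refine ⟨max k 1, le_max_right _ _, fun b => ?_⟩
    have h1 : (K * u.length : ℝ) ≤ ((compSubst τ 0 (max k 1) (s (0 + max k 1))).length : ℝ) := by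
      refine (Nat.le_ceil _).trans ?_
      exact_mod_cast hk.trans (hLmono (le_max_left _ _))
    have h2 := hquasi (max k 1) (le_max_right _ _) (s (0 + max k 1)) b
    have h3 : K * (u.length : ℝ) ≤ K * ((compSubst τ 0 (max k 1) b).length : ℝ) :=
      h1.trans h2
    have h4 : (u.length : ℝ) ≤ ((compSubst τ 0 (max k 1) b).length : ℝ) :=
      le_of_mul_le_mul_left h3 hK
    exact_mod_cast h4
  obtain ⟨n₀, ⟨hn₀1, hQ⟩, hmin⟩ : ∃ n, (1 ≤ n ∧ ∀ b : A (0+n),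
        u.length ≤ (compSubst τ 0 n b).length) ∧
      ∀ m, m < n → ¬(1 ≤ m ∧ ∀ b : A (0+m), u.length ≤ (compSubst τ 0 m b).length) :=
    ⟨Nat.find hQex, Nat.find_spec hQex, fun m hm => Nat.find_min hQex hm⟩
  have hcases : n₀ = 1 ∨ ∃ i, n₀ = i + 2 := by
    rcases Nat.lt_or_ge n₀ 2 with h | h
    · left; omega
    · right; exact ⟨n₀ - 2, by omega⟩
  rcases hcases with h1 | ⟨i, h2⟩
  · subst h1
    refine main 1 le_rfl hQ ?_
    intro c
    have hc1 : (compSubst τ 0 1 c).length = (τ 0 c).length := by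
      rw [hrec 0 c, substWord_length']
      simp [compSubst]
    rw [hc1]
    refine (hlen 0 c).trans ?_
    have hu' : (1:ℝ) ≤ (u.length : ℝ) := by exact_mod_cast hu1
    nlinarith
  · subst h2
    have hc : ∃ c : A (0+(i+1)), (compSubst τ 0 (i+1) c).length < u.length := by
      by_contra hcon
      push_neg at hcon
      exact hmin (i+1) (by omega) ⟨by omega, hcon⟩
    obtain ⟨c, hc⟩ := hc
    refine main (i+2) (by omega) hQ ?_
    have step1 : ∀ c₂ : A (0+(i+1)),
        ((compSubst τ 0 (i+1) c₂).length : ℝ) ≤ K * u.length := by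
      intro c₂
      refine (hquasi (i+1) (by omega) c₂ c).trans ?_
      have : ((compSubst τ 0 (i+1) c).length : ℝ) ≤ (u.length : ℝ) := by
        exact_mod_cast hc.le
      exact mul_le_mul_of_nonneg_left this hK.le
    intro c₁
    rw [hrec (i+1) c₁, substWord_length']
    have := list_sum_le' (τ (0+(i+1)) c₁) (fun c => (compSubst τ 0 (i+1) c).length)
      (by positivity) (hlen (0+(i+1)) c₁) (fun c₂ _ => step1 c₂)
    refine this.trans (le_of_eq ?_)
    ring
end
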